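/- (Theorem 1, equivalence of (1) and (2).) Let A ∈ ℝ^{n×n}, C ∈ ℝ^{p×n}, K ∈ ℝ^{r×n}. Then the pair (A, C) is partially detectable with respect to K if and only if for every λ ∈ ℂ with Re λ ≥ 0, the rank of the complex matrix obtained by stacking D_{[A,C],n,λ} on top of K equals the rank of D_{[A,C],n,λ} (equivalently: every v ∈ ℂⁿ with C(λI−A)^j v = 0 for all j = 0,…,n−1 and (λI−A)^n v = 0 satisfies Kv = 0). -/

import Mathlib

/-!
Everything happens over `ℂ`. A solution is `x t = exp (t • A) *ᵥ x 0`, and `C x ≡ 0` forces `x 0`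
into the unobservable subspace `N = ⋂ⱼ ker (C Aʲ)`. The kernel of `D_{[A,C],n,λ}` is
`N ∩ ker (λ - A)ⁿ`, and on `ker (λ - A)ⁿ` the flow `exp (t • A)` is `e^{λt}` times a polynomial
in `t` with coefficients `(λ - A)ʲ`.

If `K` vanishes on these kernels for `Re λ ≥ 0`, split `x 0` along the generalized eigenspaces of
`A` restricted to the invariant subspace `N`: the components with `Re λ < 0` decay, and `K` kills
the whole orbit of the others. Conversely, for `v` in such a kernel the real parts of
`exp (t • A) *ᵥ v` and of `exp (t • A) *ᵥ (I • v)` are real solutions with `C x ≡ 0`, so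
`K exp (t • A) v → 0`; by induction on the nilpotency order of `λ - A` at `v`, this limit is
`e^{λt} K v`, which tends to `0` only if `K v = 0`.
-/

open Matrix

/-- The stacked matrix `D_{[A,C],k,λ}`, obtained by vertically stacking the blocks
`C, C(λI−A), C(λI−A)², …, C(λI−A)^{k−1}` and `(λI−A)^k`, with real matrices coerced
entrywise into `ℂ`. Rows of the block `C(λI−A)^j` are indexed by `(j, row of C)`. -/
noncomputable def Dstack {n : ℕ} {p : Type*} (k : ℕ) (A : Matrix (Fin n) (Fin n) ℝ)
    (C : Matrix p (Fin n) ℝ) (lam : ℂ) : Matrix ((Fin k × p) ⊕ Fin n) (Fin n) ℂ :=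
  Matrix.fromRows
    (Matrix.of fun ki j =>
      ((C.map Complex.ofReal) *
        (lam • (1 : Matrix (Fin n) (Fin n) ℂ) - A.map Complex.ofReal) ^ (ki.1 : ℕ)) ki.2 j)
    ((lam • (1 : Matrix (Fin n) (Fin n) ℂ) - A.map Complex.ofReal) ^ k)

open NormedSpace Filter Topology
open scoped Nat

attribute [local instance] Matrix.linftyOpNormedAddCommGroup Matrix.linftyOpNormedSpace
  Matrix.linftyOpNormedRing Matrix.linftyOpNormedAlgebra

namespace Matrix

theorem ker_mulVecLin_fromRows {R m₁ m₂ n : Type*} [CommSemiring R] [Fintype n]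
    (D : Matrix m₁ n R) (E : Matrix m₂ n R) :
    LinearMap.ker (fromRows D E).mulVecLin =
      LinearMap.ker D.mulVecLin ⊓ LinearMap.ker E.mulVecLin := by
  ext v
  simp [fromRows_mulVec, ← Sum.elim_zero_zero, Sum.elim_eq_iff]

theorem rank_fromRows_eq_rank_iff {K m₁ m₂ n : Type*} [Field K] [Fintype m₁] [Fintype m₂]
    [Fintype n] (D : Matrix m₁ n K) (E : Matrix m₂ n K) :
    (fromRows D E).rank = D.rank ↔ ∀ v, D *ᵥ v = 0 → E *ᵥ v = 0 := by
  have hD := D.mulVecLin.finrank_range_add_finrank_ker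
  have hDE := (fromRows D E).mulVecLin.finrank_range_add_finrank_ker
  rw [ker_mulVecLin_fromRows] at hDE
  rw [Matrix.rank, Matrix.rank]
  constructor
  · intro h v hv
    have hker : LinearMap.ker D.mulVecLin ⊓ LinearMap.ker E.mulVecLin =
        LinearMap.ker D.mulVecLin :=
      Submodule.eq_of_le_of_finrank_eq inf_le_left (by omega)
    have hv' : v ∈ LinearMap.ker D.mulVecLin := hv
    rw [← hker] at hv'
    exact hv'.2
  · intro h
    rw [inf_eq_left.2 fun v hv => h v hv] at hDE
    omega

section Unobservable

variable {ι m : Type*} [Fintype ι] [DecidableEq ι]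

def unobservableSubspace (C : Matrix m ι ℂ) (A : Matrix ι ι ℂ) : Submodule ℂ (ι → ℂ) :=
  ⨅ j : ℕ, LinearMap.ker (C * A ^ j).mulVecLin

variable {C : Matrix m ι ℂ} {A : Matrix ι ι ℂ}

theorem mem_unobservableSubspace {v : ι → ℂ} :
    v ∈ C.unobservableSubspace A ↔ ∀ j : ℕ, (C * A ^ j) *ᵥ v = 0 := by
  simp [unobservableSubspace]

theorem mulVec_eq_zero_of_mem_unobservableSubspace {v : ι → ℂ}
    (hv : v ∈ C.unobservableSubspace A) : C *ᵥ v = 0 := by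
  simpa using mem_unobservableSubspace.1 hv 0

theorem mulVec_mem_unobservableSubspace {v : ι → ℂ}
    (hv : v ∈ C.unobservableSubspace A) : A *ᵥ v ∈ C.unobservableSubspace A := by
  rw [mem_unobservableSubspace] at hv ⊢
  intro j
  rw [mulVec_mulVec, Matrix.mul_assoc, ← pow_succ]
  exact hv (j + 1)

theorem pow_mulVec_mem_of_forall_mulVec_mem {p : Submodule ℂ (ι → ℂ)}
    (hp : ∀ v ∈ p, A *ᵥ v ∈ p) (j : ℕ) {v : ι → ℂ} (hv : v ∈ p) : A ^ j *ᵥ v ∈ p := by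
  induction j with
  | zero => simpa using hv
  | succ j ih => simpa [pow_succ', ← mulVec_mulVec] using hp _ ih

theorem le_unobservableSubspace {p : Submodule ℂ (ι → ℂ)} (hA : ∀ v ∈ p, A *ᵥ v ∈ p)
    (hC : ∀ v ∈ p, C *ᵥ v = 0) : p ≤ C.unobservableSubspace A := fun v hv =>
  mem_unobservableSubspace.2 fun j => by
    rw [← mulVec_mulVec]
    exact hC _ (pow_mulVec_mem_of_forall_mulVec_mem hA j hv)

theorem smul_one_sub_mulVec_mem {p : Submodule ℂ (ι → ℂ)} (hp : ∀ v ∈ p, A *ᵥ v ∈ p)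
    (μ : ℂ) {v : ι → ℂ} (hv : v ∈ p) : (μ • 1 - A) *ᵥ v ∈ p := by
  rw [sub_mulVec, smul_mulVec, one_mulVec]
  exact p.sub_mem (p.smul_mem μ hv) (hp v hv)

theorem unobservableSubspace_smul_one_sub (μ : ℂ) :
    C.unobservableSubspace (μ • 1 - A) = C.unobservableSubspace A := by
  have key (B : Matrix ι ι ℂ) : C.unobservableSubspace B ≤ C.unobservableSubspace (μ • 1 - B) :=
    le_unobservableSubspace
      (fun _ => smul_one_sub_mulVec_mem (fun _ => mulVec_mem_unobservableSubspace) μ)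
      fun _ => mulVec_eq_zero_of_mem_unobservableSubspace
  refine le_antisymm ?_ (key A)
  simpa using key (μ • 1 - A)

theorem smul_one_sub_pow_mulVec_mem_unobservableSubspace {μ : ℂ} (j : ℕ) {v : ι → ℂ}
    (hv : v ∈ C.unobservableSubspace A) : (μ • 1 - A) ^ j *ᵥ v ∈ C.unobservableSubspace A :=
  pow_mulVec_mem_of_forall_mulVec_mem
    (fun _ => smul_one_sub_mulVec_mem (fun _ => mulVec_mem_unobservableSubspace) μ) j hv

theorem smul_one_sub_pow_card_mulVec_eq_zero {μ : ℂ} {v : ι → ℂ}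
    (hv : v ∈ Module.End.maxGenEigenspace (toLinAlgEquiv' A) μ) :
    (μ • 1 - A) ^ Fintype.card ι *ᵥ v = 0 := by
  rw [Module.End.maxGenEigenspace_eq_genEigenspace_finrank, Module.End.mem_genEigenspace_nat,
    Module.finrank_fintype_fun_eq_card, LinearMap.mem_ker, ← map_one toLinAlgEquiv',
    ← map_smul, ← map_sub, ← map_pow, toLinAlgEquiv'_apply] at hv
  rw [← neg_sub, neg_pow, ← mulVec_mulVec, hv, mulVec_zero]

end Unobservable

theorem map_ofReal_mulVec_ofReal {ι m : Type*} [Fintype ι] (M : Matrix m ι ℝ) (x : ι → ℝ) :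
    M.map Complex.ofReal *ᵥ (fun j => (x j : ℂ)) = fun i => ((M *ᵥ x) i : ℂ) :=
  funext fun i => (RingHom.map_mulVec Complex.ofRealHom M x i).symm

theorem re_map_ofReal_mulVec {ι m : Type*} [Fintype ι] (M : Matrix m ι ℝ) (w : ι → ℂ) :
    (fun i => ((M.map Complex.ofReal *ᵥ w) i).re) = M *ᵥ fun j => (w j).re := by
  funext i
  simp [mulVec, dotProduct, Complex.re_sum]

end Matrix

theorem Dstack_mulVec_eq_zero_iff {n p : ℕ} (A : Matrix (Fin n) (Fin n) ℝ)
    (C : Matrix (Fin p) (Fin n) ℝ) (lam : ℂ) (v : Fin n → ℂ) :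
    Dstack n A C lam *ᵥ v = 0 ↔
      v ∈ (C.map Complex.ofReal).unobservableSubspace (A.map Complex.ofReal) ∧
        (lam • 1 - A.map Complex.ofReal) ^ n *ᵥ v = 0 := by
  rw [← unobservableSubspace_smul_one_sub lam, mem_unobservableSubspace]
  simp only [Dstack, fromRows_mulVec, ← Sum.elim_zero_zero, Sum.elim_eq_iff]
  refine and_congr_left fun hpow => ⟨fun h j => ?_, fun h => ?_⟩
  · rcases lt_or_ge j n with hj | hj
    · funext i
      exact congrFun h (⟨j, hj⟩, i)
    · rw [← mulVec_mulVec, ← Nat.sub_add_cancel hj, pow_add, ← mulVec_mulVec, hpow, mulVec_zero,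
        mulVec_zero]
  · funext ⟨j, i⟩
    exact congrFun (h j) i

section Derivatives

variable {ι m : Type*} [Fintype ι] [Fintype m]

theorem HasDerivAt.const_mulVec (M : Matrix m ι ℂ) {f : ℝ → ι → ℂ} {f' : ι → ℂ} {t : ℝ}
    (hf : HasDerivAt f f' t) : HasDerivAt (fun s => M *ᵥ f s) (M *ᵥ f') t :=
  (LinearMap.toContinuousLinearMap (M.mulVecLin.restrictScalars ℝ)).hasFDerivAt.comp_hasDerivAt
    t hf

theorem HasDerivAt.mulVec_const {F : ℝ → Matrix m ι ℂ} {F' : Matrix m ι ℂ} {t : ℝ}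
    (hF : HasDerivAt F F' t) (v : ι → ℂ) : HasDerivAt (fun s => F s *ᵥ v) (F' *ᵥ v) t :=
  (((LinearMap.toContinuousLinearMap ((mulVecBilin ℂ ℂ).flip v)).restrictScalars
    ℝ).hasFDerivAt.comp_hasDerivAt t hF :)

end Derivatives

theorem tendsto_cexp_mul_mul_pow_div (μ : ℂ) (hμ : μ.re < 0) (j : ℕ) :
    Tendsto (fun t : ℝ => Complex.exp (t * μ) * (-t) ^ j / j !) atTop (𝓝 0) := by
  rw [tendsto_zero_iff_norm_tendsto_zero]
  have hlim := ((isLittleO_pow_exp_pos_mul_atTop j (neg_pos.2 hμ)).tendsto_div_nhds_zero).const_mul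
    (j ! : ℝ)⁻¹
  rw [mul_zero] at hlim
  refine hlim.congr' ?_
  filter_upwards [eventually_ge_atTop 0] with t ht
  simp [Complex.norm_exp, abs_of_nonneg ht, Real.exp_neg, div_eq_mul_inv]
  rw [mul_comm μ.re]
  ring

theorem eq_zero_of_tendsto_cexp_mul_smul {E : Type*} [NormedAddCommGroup E] [NormedSpace ℂ E]
    {μ : ℂ} (hμ : 0 ≤ μ.re) {w : E}
    (h : Tendsto (fun t : ℝ => Complex.exp (t * μ) • w) atTop (𝓝 0)) : w = 0 := by
  have hle : ∀ᶠ t : ℝ in atTop, ‖w‖ ≤ ‖Complex.exp (t * μ) • w‖ := by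
    filter_upwards [eventually_ge_atTop 0] with t ht
    rw [norm_smul, Complex.norm_exp, Complex.re_ofReal_mul]
    exact le_mul_of_one_le_left (norm_nonneg w) (Real.one_le_exp (mul_nonneg ht hμ))
  exact norm_le_zero_iff.1 (ge_of_tendsto (by simpa using h.norm) hle)

namespace Matrix

section Exponential

variable {ι m : Type*} [Fintype ι] [DecidableEq ι]

theorem hasDerivAt_exp_smul_mulVec (A : Matrix ι ι ℂ) (v : ι → ℂ) (t : ℝ) :
    HasDerivAt (fun s : ℝ => exp (s • A) *ᵥ v) (A *ᵥ (exp (t • A) *ᵥ v)) t := by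
  rw [mulVec_mulVec]
  exact (hasDerivAt_exp_smul_const' (𝕂 := ℝ) A t).mulVec_const v

theorem eq_exp_smul_mulVec_of_hasDerivAt (A : Matrix ι ι ℂ) {z : ℝ → ι → ℂ}
    (hz : ∀ t, 0 ≤ t → HasDerivAt z (A *ᵥ z t) t) {t : ℝ} (ht : 0 ≤ t) :
    z t = exp (t • A) *ᵥ z 0 := by
  have hlip := (LinearMap.toContinuousLinearMap A.mulVecLin).lipschitz
  refine ODE_solution_unique_of_mem_Icc_right (v := fun _ y => A *ᵥ y) (s := fun _ => Set.univ)
    (fun _ _ => hlip.lipschitzOnWith) (fun s hs => (hz s hs.1).continuousAt.continuousWithinAt)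
    (fun s hs => (hz s hs.1).hasDerivWithinAt) (fun _ _ => trivial)
    (fun s _ => (hasDerivAt_exp_smul_mulVec A _ s).continuousAt.continuousWithinAt)
    (fun s _ => (hasDerivAt_exp_smul_mulVec A _ s).hasDerivWithinAt) (fun _ _ => trivial)
    (by simp) ⟨ht, le_rfl⟩

theorem mem_unobservableSubspace_of_forall_mulVec_exp [Fintype m] {C : Matrix m ι ℂ}
    {A : Matrix ι ι ℂ} {v : ι → ℂ} (h : ∀ t : ℝ, 0 ≤ t → C *ᵥ (exp (t • A) *ᵥ v) = 0) :
    v ∈ C.unobservableSubspace A := by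
  rw [mem_unobservableSubspace]
  suffices ∀ j : ℕ, ∀ t : ℝ, 0 ≤ t → (C * A ^ j) *ᵥ (exp (t • A) *ᵥ v) = 0 by
    simpa using fun j => this j 0 le_rfl
  intro j
  induction j with
  | zero => simpa using h
  | succ j ih =>
    intro t ht
    have hderiv := ((hasDerivAt_exp_smul_mulVec A v t).const_mulVec (C * A ^ j)).hasDerivWithinAt
      (s := Set.Ici 0)
    have hzero : HasDerivWithinAt (fun s => (C * A ^ j) *ᵥ (exp (s • A) *ᵥ v)) 0 (Set.Ici 0) t :=
      (hasDerivWithinAt_const t _ 0).congr (fun s hs => ih s hs) (ih t ht)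
    rw [pow_succ, ← Matrix.mul_assoc, ← mulVec_mulVec]
    exact (uniqueDiffOn_Ici 0 t ht).eq_deriv _ hderiv hzero

theorem exp_mulVec_eq_sum_of_pow_mulVec_eq_zero (X : Matrix ι ι ℂ) {v : ι → ℂ} {k : ℕ}
    (hX : X ^ k *ᵥ v = 0) : exp X *ᵥ v = ∑ j ∈ Finset.range k, (j ! : ℂ)⁻¹ • (X ^ j *ᵥ v) := by
  have hvanish : ∀ j ∉ Finset.range k, (j ! : ℂ)⁻¹ • (X ^ j *ᵥ v) = 0 := fun j hj => by
    rw [← Nat.sub_add_cancel (not_lt.1 (Finset.mem_range.not.1 hj)), pow_add, ← mulVec_mulVec,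
      hX, mulVec_zero, smul_zero]
  have hsum := (expSeries_summable' (𝕂 := ℂ) X).hasSum.mapL
    (LinearMap.toContinuousLinearMap ((mulVecBilin ℂ ℂ).flip v))
  simp only [LinearMap.coe_toContinuousLinearMap', LinearMap.flip_apply, mulVecBilin_apply,
    smul_mulVec] at hsum
  rw [exp_eq_tsum ℂ]
  exact hsum.unique (hasSum_sum_of_ne_finset_zero hvanish)

theorem exp_smul_mulVec_eq_sum (A : Matrix ι ι ℂ) (μ : ℂ) (t : ℝ) {v : ι → ℂ} {k : ℕ}
    (hv : (μ • 1 - A) ^ k *ᵥ v = 0) :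
    exp (t • A) *ᵥ v = ∑ j ∈ Finset.range k,
      (Complex.exp (t * μ) * (-t) ^ j / j !) • ((μ • 1 - A) ^ j *ᵥ v) := by
  set S := μ • (1 : Matrix ι ι ℂ) - A
  have hsplit : t • A = algebraMap ℂ _ (t * μ) + (-(t : ℂ)) • S := by
    rw [Algebra.algebraMap_eq_smul_one]
    simp only [S]
    module
  have hnil : ((-(t : ℂ)) • S) ^ k *ᵥ v = 0 := by rw [smul_pow, smul_mulVec, hv, smul_zero]
  rw [hsplit, Matrix.exp_add_of_commute _ _ (Algebra.commute_algebraMap_left _ _)]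
  erw [← algebraMap_exp_comm]
  rw [Algebra.algebraMap_eq_smul_one, smul_mul_assoc, one_mul, smul_mulVec,
    exp_mulVec_eq_sum_of_pow_mulVec_eq_zero _ hnil, Finset.smul_sum]
  refine Finset.sum_congr rfl fun j _ => ?_
  rw [smul_pow, smul_mulVec, smul_smul, smul_smul, ← Complex.exp_eq_exp_ℂ]
  ring_nf

end Exponential

section ComplexDetectability

variable {ι m r : Type*} [Fintype ι] [DecidableEq ι]
  {C : Matrix m ι ℂ} {K : Matrix r ι ℂ} {A : Matrix ι ι ℂ}

theorem mulVec_eq_zero_of_tendsto_mulVec_exp [Fintype r]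
    (hdet : ∀ u : ι → ℂ, (∀ t : ℝ, 0 ≤ t → C *ᵥ (exp (t • A) *ᵥ u) = 0) →
      Tendsto (fun t : ℝ => K *ᵥ (exp (t • A) *ᵥ u)) atTop (𝓝 0))
    {μ : ℂ} (hμ : 0 ≤ μ.re) {k : ℕ} {v : ι → ℂ} (hvN : v ∈ C.unobservableSubspace A)
    (hv : (μ • 1 - A) ^ k *ᵥ v = 0) : K *ᵥ v = 0 := by
  induction k generalizing v with
  | zero =>
    rw [pow_zero, one_mulVec] at hv
    rw [hv, mulVec_zero]
  | succ k ih =>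
    have hKpow : ∀ j ∈ Finset.range (k + 1), j ≠ 0 → K *ᵥ ((μ • 1 - A) ^ j *ᵥ v) = 0 := by
      intro j _ hj
      refine ih (smul_one_sub_pow_mulVec_mem_unobservableSubspace j hvN) ?_
      rw [mulVec_mulVec, ← pow_add, ← Nat.sub_add_cancel (Nat.one_le_iff_ne_zero.2 hj),
        add_comm, add_assoc, pow_add, ← mulVec_mulVec, Nat.add_comm 1 k, hv, mulVec_zero]
    have hexp := fun t : ℝ => exp_smul_mulVec_eq_sum A μ t hv
    have hC : ∀ t : ℝ, 0 ≤ t → C *ᵥ (exp (t • A) *ᵥ v) = 0 := fun t _ => by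
      rw [hexp, mulVec_sum]
      refine Finset.sum_eq_zero fun j _ => ?_
      rw [mulVec_smul, mulVec_eq_zero_of_mem_unobservableSubspace
        (smul_one_sub_pow_mulVec_mem_unobservableSubspace j hvN), smul_zero]
    have hK : ∀ t : ℝ, K *ᵥ (exp (t • A) *ᵥ v) = Complex.exp (t * μ) • (K *ᵥ v) := fun t => by
      rw [hexp, mulVec_sum, Finset.sum_eq_single_of_mem 0 (by simp)
        fun j hj hj0 => by rw [mulVec_smul, hKpow j hj hj0, smul_zero]]
      simp [mulVec_smul]
    exact eq_zero_of_tendsto_cexp_mul_smul hμ ((hdet v hC).congr hK)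

theorem tendsto_mulVec_exp_smul_mulVec_of_pow_mulVec_eq_zero
    (hK : ∀ μ : ℂ, 0 ≤ μ.re → ∀ v ∈ C.unobservableSubspace A,
      (μ • 1 - A) ^ Fintype.card ι *ᵥ v = 0 → K *ᵥ v = 0)
    {μ : ℂ} {v : ι → ℂ} (hvN : v ∈ C.unobservableSubspace A)
    (hv : (μ • 1 - A) ^ Fintype.card ι *ᵥ v = 0) :
    Tendsto (fun t : ℝ => K *ᵥ (exp (t • A) *ᵥ v)) atTop (𝓝 0) := by
  simp_rw [exp_smul_mulVec_eq_sum A μ _ hv, mulVec_sum, mulVec_smul]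
  refine Finset.sum_const_zero (M := r → ℂ) ▸ tendsto_finsetSum _ fun j _ => ?_
  by_cases hμ : 0 ≤ μ.re
  · have hKj := hK μ hμ _ (smul_one_sub_pow_mulVec_mem_unobservableSubspace j hvN) (by
      rw [mulVec_mulVec, ← pow_add, add_comm, pow_add, ← mulVec_mulVec, hv, mulVec_zero])
    simp [hKj]
  · simpa using (tendsto_cexp_mul_mul_pow_div μ (not_le.1 hμ) j).smul_const
      (K *ᵥ ((μ • 1 - A) ^ j *ᵥ v))

theorem tendsto_mulVec_exp_smul_mulVec
    (hK : ∀ μ : ℂ, 0 ≤ μ.re → ∀ v ∈ C.unobservableSubspace A,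
      (μ • 1 - A) ^ Fintype.card ι *ᵥ v = 0 → K *ᵥ v = 0)
    {z : ι → ℂ} (hz : z ∈ C.unobservableSubspace A) :
    Tendsto (fun t : ℝ => K *ᵥ (exp (t • A) *ᵥ z)) atTop (𝓝 0) := by
  rw [Submodule.eq_iSup_inf_genEigenspace (f := toLinAlgEquiv' A) ⊤
    (fun _ => mulVec_mem_unobservableSubspace) (Module.End.iSup_maxGenEigenspace_eq_top _),
    Submodule.mem_iSup_iff_exists_finsupp] at hz
  obtain ⟨c, hc, rfl⟩ := hz
  simp_rw [Finsupp.sum, mulVec_sum]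
  exact Finset.sum_const_zero (M := r → ℂ) ▸ tendsto_finsetSum _ fun μ _ =>
    tendsto_mulVec_exp_smul_mulVec_of_pow_mulVec_eq_zero hK (hc μ).1
      (smul_one_sub_pow_card_mulVec_eq_zero (hc μ).2)

end ComplexDetectability

section RealDetectability

variable {ι m r : Type*} [Fintype ι] [DecidableEq ι]

def IsPartiallyDetectable (A : Matrix ι ι ℝ) (C : Matrix m ι ℝ) (K : Matrix r ι ℝ) : Prop :=
  ∀ x : ℝ → ι → ℝ, Differentiable ℝ x → (∀ t : ℝ, 0 ≤ t → deriv x t = A *ᵥ x t) →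
    (∀ t : ℝ, 0 ≤ t → C *ᵥ x t = 0) → Tendsto (fun t => K *ᵥ x t) atTop (𝓝 0)

variable {A : Matrix ι ι ℝ} {C : Matrix m ι ℝ} {K : Matrix r ι ℝ}

theorem IsPartiallyDetectable.tendsto_re (hdet : IsPartiallyDetectable A C K) {u : ι → ℂ}
    (hu : ∀ t : ℝ, 0 ≤ t → C.map Complex.ofReal *ᵥ (exp (t • A.map Complex.ofReal) *ᵥ u) = 0) :
    Tendsto (fun t : ℝ => fun i =>
      ((K.map Complex.ofReal *ᵥ (exp (t • A.map Complex.ofReal) *ᵥ u)) i).re) atTop (𝓝 0) := by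
  set x : ℝ → ι → ℝ := fun t j => ((exp (t • A.map Complex.ofReal) *ᵥ u) j).re
  have hx : ∀ t, HasDerivAt x (A *ᵥ x t) t := fun t => by
    rw [← re_map_ofReal_mulVec]
    exact hasDerivAt_pi.2 fun j => Complex.reCLM.hasFDerivAt.comp_hasDerivAt t
      (hasDerivAt_pi.1 (hasDerivAt_exp_smul_mulVec _ u t) j)
  have hCx : ∀ t : ℝ, 0 ≤ t → C *ᵥ x t = 0 := fun t ht => by
    rw [← re_map_ofReal_mulVec, hu t ht]
    rfl
  exact (hdet x (fun t => (hx t).differentiableAt) (fun t _ => (hx t).deriv) hCx).congr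
    fun t => (re_map_ofReal_mulVec K _).symm

theorem IsPartiallyDetectable.tendsto_mulVec_exp (hdet : IsPartiallyDetectable A C K)
    {u : ι → ℂ}
    (hu : ∀ t : ℝ, 0 ≤ t → C.map Complex.ofReal *ᵥ (exp (t • A.map Complex.ofReal) *ᵥ u) = 0) :
    Tendsto (fun t : ℝ => K.map Complex.ofReal *ᵥ (exp (t • A.map Complex.ofReal) *ᵥ u))
      atTop (𝓝 0) := by
  have hre := tendsto_pi_nhds.1 (hdet.tendsto_re hu)
  -- the real part of the trajectory through `I • u` is minus the imaginary part of that through `u`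
  have him := tendsto_pi_nhds.1 (hdet.tendsto_re (u := Complex.I • u) fun t ht => by
    rw [mulVec_smul, mulVec_smul, hu t ht, smul_zero])
  refine tendsto_pi_nhds.2 fun i =>
    squeeze_zero_norm (fun t => Complex.norm_le_abs_re_add_abs_im _) ?_
  simpa [mulVec_smul] using (hre i).abs.add (him i).abs

theorem isPartiallyDetectable_of_tendsto_mulVec_exp [Fintype m]
    (h : ∀ z ∈ (C.map Complex.ofReal).unobservableSubspace (A.map Complex.ofReal),
      Tendsto (fun t : ℝ => K.map Complex.ofReal *ᵥ (exp (t • A.map Complex.ofReal) *ᵥ z))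
        atTop (𝓝 0)) :
    IsPartiallyDetectable A C K := by
  intro x hx hAx hCx
  set z : ℝ → ι → ℂ := fun t j => (x t j : ℂ)
  have hz : ∀ t : ℝ, 0 ≤ t → HasDerivAt z (A.map Complex.ofReal *ᵥ z t) t := fun t ht => by
    rw [map_ofReal_mulVec_ofReal, ← hAx t ht]
    exact hasDerivAt_pi.2 fun j => (hasDerivAt_pi.1 (hx t).hasDerivAt j).ofReal_comp
  have hsol := fun t (ht : (0 : ℝ) ≤ t) => eq_exp_smul_mulVec_of_hasDerivAt _ hz ht
  have hz0 : z 0 ∈ (C.map Complex.ofReal).unobservableSubspace (A.map Complex.ofReal) :=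
    mem_unobservableSubspace_of_forall_mulVec_exp fun t ht => by
      rw [← hsol t ht, map_ofReal_mulVec_ofReal, hCx t ht]
      rfl
  refine tendsto_pi_nhds.2 fun i => ?_
  have hre := (Complex.continuous_re.tendsto 0).comp (tendsto_pi_nhds.1 (h _ hz0) i)
  refine (hre.congr' ?_).trans (by simp)
  filter_upwards [eventually_ge_atTop 0] with t ht
  rw [Function.comp_apply, ← hsol t ht, map_ofReal_mulVec_ofReal, Complex.ofReal_re]

end RealDetectability

end Matrix

/-- **Theorem 1, (1) ⇔ (2).** The pair `(A, C)` is partially detectable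
with respect to `K` (every differentiable solution of `x' = Ax` with `Cx ≡ 0` on
`[0,∞)` satisfies `Kx(t) → 0`) if and only if for every `λ ∈ ℂ` with `Re λ ≥ 0`, the
rank of `D_{[A,C],n,λ}` stacked on top of `K` equals the rank of `D_{[A,C],n,λ}`. -/
theorem stmt_5 (n p r : ℕ) (A : Matrix (Fin n) (Fin n) ℝ) (C : Matrix (Fin p) (Fin n) ℝ)
    (K : Matrix (Fin r) (Fin n) ℝ) :
    (∀ x : ℝ → (Fin n → ℝ), Differentiable ℝ x →
        (∀ t : ℝ, 0 ≤ t → deriv x t = A.mulVec (x t)) →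
        (∀ t : ℝ, 0 ≤ t → C.mulVec (x t) = 0) →
        Filter.Tendsto (fun t => K.mulVec (x t)) Filter.atTop (nhds 0)) ↔
    (∀ lam : ℂ, 0 ≤ lam.re →
        (Matrix.fromRows (Dstack n A C lam) (K.map Complex.ofReal)).rank =
          (Dstack n A C lam).rank) := by
  change IsPartiallyDetectable A C K ↔ _
  simp only [rank_fromRows_eq_rank_iff, Dstack_mulVec_eq_zero_iff, and_imp]
  constructor
  · intro hdet lam hlam v hvN hv
    exact mulVec_eq_zero_of_tendsto_mulVec_exp (fun u hu => hdet.tendsto_mulVec_exp hu) hlam hvN hv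
  · intro hrank
    refine isPartiallyDetectable_of_tendsto_mulVec_exp fun z hz =>
      tendsto_mulVec_exp_smul_mulVec (fun μ hμ v hvN hv => hrank μ hμ v hvN ?_) hz
    rwa [Fintype.card_fin] at hv
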